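/- arXiv:2210.12419 — 3 statements merged into one kernel-verified Lean document; each statement's English description precedes it below -/
import Mathlib

section
/- Let C be a Grothendieck category and L ⊆ L′ localizing subcategories with L stable. If L′ is stable in C then L′/L is stable in C/L. -/
/-!
Let `T ⊣ S` be the quotient functor `C ⥤ C/L` and its fully faithful section functor, so that
`T S ≅ 𝟭`. If `A ∈ L′`, the unit `A ⟶ S (T A)` becomes invertible under `T`, so its cokernel
lies in `L ⊆ L′` and hence `S (T A) ∈ L′`. The functor `S` preserves essential monomorphisms:
`T` detects monomorphisms out of objects `S Y`, and `T S ≅ 𝟭` turns a test morphism for `S f`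
into one for `f`. So for an essential monomorphism `X ⟶ Y` in `C/L` with `X ≅ T A`, stability
of `L′` gives `S Y ∈ L′`, and `Y ≅ T (S Y)` lies in `L′/L`.
-/

open CategoryTheory Limits

universe w v u u₂ u₃ u₄ u₅

namespace CentralSheaf

variable {C : Type u} [Category.{v} C] [Abelian C]

/-- A monomorphism is essential if every morphism whose precomposition with it
is a monomorphism is itself a monomorphism. -/
def IsEssentialMono {X Y : C} (f : X ⟶ Y) : Prop :=
  Mono f ∧ ∀ ⦃Z : C⦄ (g : Y ⟶ Z), Mono (f ≫ g) → Mono g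

/-- A Serre subcategory of an abelian category, given as a predicate on objects:
it contains the zero objects and is closed under isomorphisms, subobjects,
quotient objects and extensions. -/
structure IsSerre (P : C → Prop) : Prop where
  zero : ∀ X : C, IsZero X → P X
  iso : ∀ {X Y : C}, (X ≅ Y) → P X → P Y
  sub : ∀ {X Y : C} (f : X ⟶ Y), Mono f → P Y → P X
  quot : ∀ {X Y : C} (f : X ⟶ Y), Epi f → P X → P Y
  ext : ∀ S : ShortComplex C, S.ShortExact → P S.X₁ → P S.X₃ → P S.X₂

/-- A localizing subcategory: a Serre subcategory closed under arbitrary direct sums. -/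
structure IsLocalizing (P : C → Prop) extends IsSerre P : Prop where
  sums : ∀ {ι : Type v} (X : ι → C) (c : Cofan X), IsColimit c → (∀ i, P (X i)) → P c.pt

/-- Stability: closure under essential extensions. -/
def IsStable (P : C → Prop) : Prop :=
  ∀ {X Y : C} (f : X ⟶ Y), IsEssentialMono f → P X → P Y

/-- A stable localizing subcategory. -/
structure IsStableLocalizing (P : C → Prop) extends IsLocalizing P : Prop where
  stable : IsStable P

/-- Data exhibiting `D` as the Gabriel quotient `C/P` of `C` by the localizing
subcategory `P`: an exact quotient functor `T` with fully faithful right adjoint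
(section functor) `S`, whose kernel is exactly `P`. -/
structure QuotientData (P : C → Prop) (D : Type u₂) [Category.{v} D] [Abelian D] where
  T : C ⥤ D
  S : D ⥤ C
  adj : T ⊣ S
  additive : T.Additive
  preservesFiniteLimits : PreservesFiniteLimits T
  fullS : S.Full
  faithfulS : S.Faithful
  ker : ∀ X : C, P X ↔ IsZero (T.obj X)

/-- `t` is the `P`-torsion subobject of its ambient object: it lies in `P` and
contains every subobject lying in `P`. -/
def IsTorsionSubobject (P : C → Prop) {X : C} (t : Subobject X) : Prop :=
  P ((t : C)) ∧ ∀ s : Subobject X, P ((s : C)) → s ≤ t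

/-- `P₃` is the smallest localizing subcategory containing `P₁` and `P₂`. -/
def IsJoin (P₁ P₂ P₃ : C → Prop) : Prop :=
  IsLocalizing P₃ ∧ (∀ X, P₁ X → P₃ X) ∧ (∀ X, P₂ X → P₃ X) ∧
    ∀ Q : C → Prop, IsLocalizing Q → (∀ X, P₁ X → Q X) → (∀ X, P₂ X → Q X) →
      ∀ X, P₃ X → Q X

/-- An object is noetherian if its subobjects satisfy the ascending chain condition. -/
def IsNoetherianObject (X : C) : Prop := WellFoundedGT (Subobject X)

/-- A Grothendieck category is locally noetherian if it has a (separating) set of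
noetherian generators. -/
def IsLocallyNoetherian (C : Type u) [Category.{v} C] [Abelian C] : Prop :=
  ∃ 𝒢 : Set C, ObjectProperty.IsSeparating (fun G => G ∈ 𝒢) ∧ ∀ G ∈ 𝒢, IsNoetherianObject G

theorem _root_.CategoryTheory.Adjunction.mono_of_mono_leftAdjoint_map
    {E F : Type*} [Category E] [Category F] {L : E ⥤ F} {R : F ⥤ E} (adj : L ⊣ R)
    {Y : F} {Z : E} (g : R.obj Y ⟶ Z) [Mono (L.map g)] : Mono g where
  right_cancellation a b hab := by
    have hLab : L.map a = L.map b := by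
      rw [← cancel_mono (L.map g), ← L.map_comp, ← L.map_comp, hab]
    apply (adj.homEquiv _ Y).symm.injective
    rw [Adjunction.homEquiv_counit, Adjunction.homEquiv_counit, hLab]

theorem IsSerre.of_source_of_cokernel {P : C → Prop} (hP : IsSerre P) {A B : C}
    (u : A ⟶ B) (hA : P A) (hcoker : P (cokernel u)) : P B := by
  let S : ShortComplex C := ShortComplex.mk (Abelian.image.ι u) (cokernel.π u)
    (kernel.condition _)
  have hS : S.ShortExact := ⟨S.exact_of_f_is_kernel (kernelIsKernel (cokernel.π u))⟩
  exact hP.ext S hS (hP.quot (Abelian.factorThruImage u) inferInstance hA) hcoker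

namespace QuotientData

variable {D : Type u₂} [Category.{v} D] [Abelian D] {P : C → Prop} (Q : QuotientData P D)

instance : PreservesFiniteLimits Q.T := Q.preservesFiniteLimits

instance : Q.S.Full := Q.fullS

instance : Q.S.Faithful := Q.faithfulS

theorem ker_cokernel_of_epi_map {A B : C} (u : A ⟶ B) [Epi (Q.T.map u)] :
    P (cokernel u) := by
  have : PreservesColimits Q.T := Q.adj.leftAdjoint_preservesColimits
  rw [Q.ker]
  exact (isZero_zero D).of_iso
    ((PreservesCokernel.iso Q.T u).trans (cokernel.ofEpi (Q.T.map u)))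

instance isIso_map_unit_app (A : C) : IsIso (Q.T.map (Q.adj.unit.app A)) :=
  have : IsIso (Q.T.map (Q.adj.unit.app A) ≫ Q.adj.counit.app (Q.T.obj A)) := by
    rw [Q.adj.left_triangle_components A]
    exact IsIso.id _
  IsIso.of_isIso_comp_right _ (Q.adj.counit.app (Q.T.obj A))

theorem prop_S_obj_T_obj {P' : C → Prop} (hP' : IsSerre P') (hle : ∀ X, P X → P' X) {A : C}
    (hA : P' A) : P' (Q.S.obj (Q.T.obj A)) :=
  hP'.of_source_of_cokernel (Q.adj.unit.app A) hA (hle _ (Q.ker_cokernel_of_epi_map _))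

theorem isEssentialMono_S_map {X Y : D} {f : X ⟶ Y} (hf : IsEssentialMono f) :
    IsEssentialMono (Q.S.map f) := by
  have : Mono f := hf.1
  have : PreservesLimits Q.S := Q.adj.rightAdjoint_preservesLimits
  refine ⟨inferInstance, fun Z g hg => ?_⟩
  have hTSf : Q.T.map (Q.S.map f) = Q.adj.counit.app X ≫ f ≫ inv (Q.adj.counit.app Y) := by
    rw [← Category.assoc, IsIso.eq_comp_inv]
    exact Q.adj.counit.naturality f
  have hTg : Mono (inv (Q.adj.counit.app Y) ≫ Q.T.map g) := by
    refine hf.2 _ ?_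
    have := Q.T.map_mono (Q.S.map f ≫ g)
    rwa [Functor.map_comp, hTSf, Category.assoc, Category.assoc, mono_comp_iff_of_isIso] at this
  have : Mono (Q.T.map g) := (mono_comp_iff_of_isIso _ _).1 hTg
  exact Q.adj.mono_of_mono_leftAdjoint_map g

end QuotientData

theorem quotient_stable_of_stable_general
    {D : Type u₂} [Category.{v} D] [Abelian D]
    (P P' : C → Prop) (hP' : IsLocalizing P')
    (hle : ∀ X, P X → P' X) (Q : QuotientData P D)
    (P'' : D → Prop)
    (hP'' : ∀ Y : D, P'' Y ↔ ∃ X : C, P' X ∧ Nonempty (Q.T.obj X ≅ Y))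
    (hst : IsStable P') :
    IsStable P'' := by
  intro X Y f hf hX
  obtain ⟨A, hA, ⟨e⟩⟩ := (hP'' X).mp hX
  have hSX : P' (Q.S.obj X) :=
    hP'.iso (Q.S.mapIso e) (Q.prop_S_obj_T_obj hP'.toIsSerre hle hA)
  have hSY : P' (Q.S.obj Y) := hst (Q.S.map f) (Q.isEssentialMono_S_map hf) hSX
  exact (hP'' Y).mpr ⟨Q.S.obj Y, hSY, ⟨asIso (Q.adj.counit.app Y)⟩⟩

/-- Let `L ⊆ L′` be localizing subcategories of a Grothendieck
category `C` with `L` stable. If `L′` is stable in `C`, then the image `L′/L`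
of `L′` in `C/L` is stable. -/
theorem quotient_stable_of_stable
    [HasColimits C] [AB5 C] (hsep : ∃ G : C, IsSeparator G)
    {D : Type u₂} [Category.{v} D] [Abelian D]
    (P P' : C → Prop) (hP : IsStableLocalizing P) (hP' : IsLocalizing P')
    (hle : ∀ X, P X → P' X) (Q : QuotientData P D)
    (P'' : D → Prop)
    (hP'' : ∀ Y : D, P'' Y ↔ ∃ X : C, P' X ∧ Nonempty (Q.T.obj X ≅ Y))
    (hst : IsStable P') :
    IsStable P'' :=
  quotient_stable_of_stable_general P P' hP' hle Q P'' hP'' hst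

end CentralSheaf
end

section
/- Let C be a Grothendieck category. If L₁ and L₂ are stable localizing subcategories of C, then L₁ ∨ L₂ (the smallest localizing subcategory containing both) is also stable. -/
/-!
Let `T = TorsionQuotientMem P₁ P₂` be the class of objects whose quotient by their
`P₁`-torsion subobject lies in `P₂`. It contains `P₁` and `P₂`, lies in every localizing class
containing both, and is itself localizing, so it is the join. Closure under extensions is where
stability of `P₂` enters: in the `P₁`-torsion-free quotient `F` of the middle term, the image
`M` of the left term sits essentially inside a subobject `N` with `N / M ∈ P₁` and
`F / N ∈ P₂`, because a torsion-free object has no nonzero subobject in `P₁`. Finally `T` is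
stable: if `X ⊆ Y` is essential, the image of `X` in `Y / t₁ Y` is essential, since the
preimage of a subobject meeting it trivially is an essential extension of its intersection
with `X`, which is `P₁`-torsion; stability of `P₁` makes the preimage torsion, so the
subobject vanishes.
-/

open CategoryTheory Limits

universe w v u u₂ u₃ u₄ u₅

namespace CentralSheaf

variable {C : Type u} [Category.{v} C] [Abelian C]

section EssentialMono

variable {X Y K : C}

/- For monomorphisms `k` and `f` into `Y`, `Mono (k ≫ cokernel.π f)` says that the subobjects
`k` and `f` intersect trivially. -/
lemma mono_comp_cokernel_π_of_forall {f : X ⟶ Y} [Mono f] (k : K ⟶ Y)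
    (h : ∀ ⦃W : C⦄ (u : W ⟶ K) (v : W ⟶ X), u ≫ k = v ≫ f → u = 0) :
    Mono (k ≫ cokernel.π f) :=
  Preadditive.mono_of_cancel_zero _ fun u hu =>
    h u _ (Abelian.monoLift_comp f (u ≫ k) (by rwa [Category.assoc])).symm

lemma isEssentialMono_iff {f : X ⟶ Y} [Mono f] :
    IsEssentialMono f ↔
      ∀ ⦃K : C⦄ (k : K ⟶ Y) [Mono k], Mono (k ≫ cokernel.π f) → IsZero K := by
  refine ⟨fun hf K k _ hk => ?_, fun h => ⟨‹_›, fun Z g hg => ?_⟩⟩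
  · have : Mono (f ≫ cokernel.π k) := mono_comp_cokernel_π_of_forall f fun W u v huv => by
      have hv : v ≫ k ≫ cokernel.π f = 0 := by
        rw [← Category.assoc, ← huv, Category.assoc, cokernel.condition, comp_zero]
      rw [← cancel_mono f, huv, zero_of_comp_mono _ hv, zero_comp, zero_comp]
    have := hf.2 _ this
    exact IsZero.of_mono_eq_zero k (zero_of_comp_mono _ (cokernel.condition k))
  · refine Preadditive.mono_of_isZero_kernel g (h (kernel.ι g) ?_)
    refine mono_comp_cokernel_π_of_forall _ fun W u v huv => ?_
    have hv : v ≫ f ≫ g = 0 := by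
      rw [← Category.assoc, ← huv, Category.assoc, kernel.condition, comp_zero]
    rw [← cancel_mono (kernel.ι g), huv, zero_of_comp_mono _ hv, zero_comp, zero_comp]

lemma IsEssentialMono.pullback_snd {f : X ⟶ Y} (hf : IsEssentialMono f) (k : K ⟶ Y) [Mono k] :
    IsEssentialMono (pullback.snd f k) := by
  have := hf.1
  refine isEssentialMono_iff.2 fun L l _ hl => (isEssentialMono_iff.1 hf) (l ≫ k) ?_
  refine mono_comp_cokernel_π_of_forall _ fun W u v huv => ?_
  have hu : u ≫ l = pullback.lift v (u ≫ l) (by rw [← huv, Category.assoc]) ≫ pullback.snd f k :=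
    (pullback.lift_snd _ _ _).symm
  refine zero_of_comp_mono (l ≫ cokernel.π (pullback.snd f k)) ?_
  rw [← Category.assoc, hu, Category.assoc, cokernel.condition, comp_zero]

end EssentialMono

section Pullbacks

variable {F G T : C}

lemma shortExact_pullback_lift_kernel_ι (q : F ⟶ G) [Epi q] (s : T ⟶ G) :
    (ShortComplex.mk (pullback.lift (kernel.ι q) 0 (by simp) : kernel q ⟶ pullback q s)
      (pullback.snd q s) (pullback.lift_snd _ _ _)).ShortExact := by
  refine .mk' (ShortComplex.exact_of_f_is_kernel _ <| KernelFork.IsLimit.ofι _ _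
    (fun z hz => kernel.lift q (z ≫ pullback.fst q s) ?_) (fun z hz => ?_) (fun z hz m hm => ?_))
    ?_ (by dsimp; infer_instance)
  · rw [Category.assoc, pullback.condition, ← Category.assoc, hz, zero_comp]
  · apply pullback.hom_ext
    · rw [Category.assoc, pullback.lift_fst, kernel.lift_ι]
    · rw [Category.assoc, pullback.lift_snd, comp_zero]; exact hz.symm
  · rw [← cancel_mono (kernel.ι q), kernel.lift_ι, ← hm, Category.assoc, pullback.lift_fst]
  · exact mono_of_mono_fac (pullback.lift_fst _ _ _)

lemma shortExact_pullback_fst (q : F ⟶ G) [Epi q] (s : T ⟶ G) [Mono s] :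
    (ShortComplex.mk (pullback.fst q s) (q ≫ cokernel.π s)
      (by rw [pullback.condition_assoc, cokernel.condition, comp_zero])).ShortExact := by
  refine .mk' (ShortComplex.exact_of_f_is_kernel _ <| KernelFork.IsLimit.ofι _ _
    (fun z hz => pullback.lift z (Abelian.monoLift s (z ≫ q) (by simpa using hz))
      (Abelian.monoLift_comp _ _ _).symm)
    (fun z hz => pullback.lift_fst _ _ _) (fun z hz m hm => ?_)) inferInstance
    (by dsimp; exact epi_comp _ _)
  exact pullback.hom_ext (by rw [pullback.lift_fst]; exact hm) (by
    rw [← cancel_mono s, pullback.lift_snd, Abelian.monoLift_comp, Category.assoc,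
      ← pullback.condition, ← Category.assoc, hm])

end Pullbacks

namespace IsSerre

variable {P : C → Prop}

lemma mem_cokernel_of_epi (hP : IsSerre P) {A B X Z : C} {s : A ⟶ X} {t : B ⟶ Z}
    (p : X ⟶ Z) [Epi p] (h : s ≫ p ≫ cokernel.π t = 0) (hs : P (cokernel s)) : P (cokernel t) :=
  hP.quot _ (epi_of_epi_fac (cokernel.π_desc s _ h)) hs

lemma mem_image_of_comp_eq_zero (hP : IsSerre P) {A X Z : C} {s : A ⟶ X} (b : X ⟶ Z)
    (h : s ≫ b = 0) (hs : P (cokernel s)) : P (Abelian.image b) :=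
  hP.quot (cokernel.desc s (Abelian.factorThruImage b)
      (by rw [← cancel_mono (Abelian.image.ι b), Category.assoc, Abelian.image.fac, h, zero_comp]))
    (epi_of_epi_fac (cokernel.π_desc _ _ _)) hs

end IsSerre

def IsTorsionFree (P : C → Prop) (X : C) : Prop :=
  ∀ ⦃A : C⦄ (a : A ⟶ X), Mono a → P A → IsZero A

lemma isEssentialMono_of_isTorsionFree {P : C → Prop} (hP : IsSerre P) {M N : C} (j : M ⟶ N)
    [Mono j] (hN : IsTorsionFree P N) (hj : P (cokernel j)) : IsEssentialMono j :=
  isEssentialMono_iff.2 fun _ k _ hk => hN k ‹_› (hP.sub _ hk hj)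

namespace IsTorsionSubobject

variable {P : C → Prop} {X : C} {t : Subobject X}

lemma comp_cokernel_π_eq_zero (hP : IsSerre P) (ht : IsTorsionSubobject P t) {A : C}
    (a : A ⟶ X) (hA : P A) : a ≫ cokernel.π t.arrow = 0 := by
  have hle : Subobject.mk (Abelian.image.ι a) ≤ t :=
    ht.2 _ (hP.iso (Subobject.underlyingIso _).symm
      (hP.quot (Abelian.factorThruImage a) inferInstance hA))
  rw [← Abelian.image.fac a, Category.assoc, ← Subobject.ofMkLE_arrow hle, Category.assoc,
    cokernel.condition, comp_zero, comp_zero]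

lemma mem_of_comp_cokernel_π_eq_zero (hP : IsSerre P) (ht : IsTorsionSubobject P t) {A : C}
    (a : A ⟶ X) [Mono a] (h : a ≫ cokernel.π t.arrow = 0) : P A :=
  hP.sub (Abelian.monoLift t.arrow a h) (mono_of_mono_fac (Abelian.monoLift_comp _ _ _)) ht.1

lemma isTorsionFree_cokernel (hP : IsSerre P) (ht : IsTorsionSubobject P t) :
    IsTorsionFree P (cokernel t.arrow) := by
  intro A a _ hA
  have hK : P (pullback (cokernel.π t.arrow) a) :=
    hP.ext _ (shortExact_pullback_lift_kernel_ι _ a)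
      (hP.quot (Abelian.factorThruImage t.arrow) inferInstance ht.1) hA
  have hsnd : pullback.snd (cokernel.π t.arrow) a ≫ a = 0 := by
    rw [← pullback.condition, ht.comp_cokernel_π_eq_zero hP _ hK]
  refine IsZero.of_mono_eq_zero a ?_
  rwa [← cancel_epi (pullback.snd (cokernel.π t.arrow) a), comp_zero]

end IsTorsionSubobject

lemma exists_isTorsionSubobject {P : C → Prop} (hP : IsLocalizing P) [WellPowered.{v} C]
    [HasCoproducts.{v} C] (X : C) : ∃ t : Subobject X, IsTorsionSubobject P t := by
  let e := equivShrink.{v} {s : Subobject X // P (s : C)}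
  let F : Shrink.{v} {s : Subobject X // P (s : C)} → C := fun i => ((e.symm i).1 : C)
  let q : ∐ F ⟶ X := Sigma.desc fun i => (e.symm i).1.arrow
  have hq : P (∐ F) :=
    hP.sums F (Cofan.mk (∐ F) (Sigma.ι F)) (coproductIsCoproduct F) fun i => (e.symm i).2
  refine ⟨Subobject.mk (Abelian.image.ι q), hP.iso (Subobject.underlyingIso _).symm
    (hP.quot (Abelian.factorThruImage q) inferInstance hq), fun s hs => ?_⟩
  simpa [q] using Subobject.le_mk_of_comm (Sigma.ι F (e ⟨s, hs⟩) ≫ Abelian.factorThruImage q)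
    (by rw [Category.assoc, Abelian.image.fac, Sigma.ι_desc])

lemma mem_of_isTorsionFree_of_epi {P₁ P₂ : C → Prop} (h₁ : IsSerre P₁) (h₂ : IsSerre P₂)
    (hst : IsStable P₂) {F G T : C} (hF : IsTorsionFree P₁ F) (q : F ⟶ G) [Epi q]
    (hq : P₂ (kernel q)) (t : T ⟶ G) [Mono t] (hT : P₁ T) (ht : P₂ (cokernel t)) : P₂ F := by
  have hS := shortExact_pullback_lift_kernel_ι q t
  let j : kernel q ⟶ pullback q t := pullback.lift (kernel.ι q) 0 (by simp)
  have : Mono j := hS.mono_f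
  have hj : P₁ (cokernel j) :=
    h₁.iso (IsColimit.coconePointUniqueUpToIso (cokernelIsCokernel _) hS.gIsCokernel).symm hT
  have hN : P₂ (pullback q t) := hst j (isEssentialMono_of_isTorsionFree h₁ j
    (fun _ a _ hA => hF (a ≫ pullback.fst q t) inferInstance hA) hj) hq
  exact h₂.ext _ (shortExact_pullback_fst q t) hN ht

def TorsionQuotientMem (P₁ P₂ : C → Prop) (X : C) : Prop :=
  ∃ t : Subobject X, IsTorsionSubobject P₁ t ∧ P₂ (cokernel t.arrow)

namespace TorsionQuotientMem

variable {P₁ P₂ : C → Prop} [WellPowered.{v} C] [HasCoproducts.{v} C]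

lemma of_mem_left (h₁ : IsLocalizing P₁) (h₂ : IsSerre P₂) {X : C} (hX : P₁ X) :
    TorsionQuotientMem P₁ P₂ X := by
  obtain ⟨t, ht⟩ := exists_isTorsionSubobject h₁ X
  have hπ := ht.comp_cokernel_π_eq_zero h₁.toIsSerre (𝟙 X) hX
  rw [Category.id_comp] at hπ
  exact ⟨t, ht, h₂.zero _ (IsZero.of_epi_eq_zero _ hπ)⟩

lemma of_mem_right (h₁ : IsLocalizing P₁) (h₂ : IsSerre P₂) {X : C} (hX : P₂ X) :
    TorsionQuotientMem P₁ P₂ X :=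
  have ⟨t, ht⟩ := exists_isTorsionSubobject h₁ X
  ⟨t, ht, h₂.quot (cokernel.π t.arrow) inferInstance hX⟩

lemma of_mono (h₁ : IsLocalizing P₁) (h₂ : IsSerre P₂) {X Y : C} (f : X ⟶ Y) [Mono f]
    (hY : TorsionQuotientMem P₁ P₂ Y) : TorsionQuotientMem P₁ P₂ X := by
  obtain ⟨t, ht, hc⟩ := hY
  obtain ⟨t', ht'⟩ := exists_isTorsionSubobject h₁ X
  refine ⟨t', ht', ?_⟩
  set g := f ≫ cokernel.π t.arrow
  have hker : P₁ (kernel g) := ht.mem_of_comp_cokernel_π_eq_zero h₁.toIsSerre (kernel.ι g ≫ f)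
    (by rw [Category.assoc]; exact kernel.condition g)
  have hcoim : P₂ (Abelian.coimage g) :=
    h₂.iso (Abelian.coimageIsoImage g).symm (h₂.sub (Abelian.image.ι g) inferInstance hc)
  refine h₂.mem_cokernel_of_epi (𝟙 X) ?_ hcoim
  rw [Category.id_comp]
  exact ht'.comp_cokernel_π_eq_zero h₁.toIsSerre _ hker

lemma of_epi (h₁ : IsLocalizing P₁) (h₂ : IsSerre P₂) {X Y : C} (p : X ⟶ Y) [Epi p]
    (hX : TorsionQuotientMem P₁ P₂ X) : TorsionQuotientMem P₁ P₂ Y := by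
  obtain ⟨t, ht, hc⟩ := hX
  obtain ⟨t', ht'⟩ := exists_isTorsionSubobject h₁ Y
  refine ⟨t', ht', h₂.mem_cokernel_of_epi p ?_ hc⟩
  rw [← Category.assoc]
  exact ht'.comp_cokernel_π_eq_zero h₁.toIsSerre _ ht.1

lemma of_isColimit (h₁ : IsLocalizing P₁) (h₂ : IsLocalizing P₂) {ι : Type v} (X : ι → C)
    (c : Cofan X) (hc : IsColimit c) (hX : ∀ i, TorsionQuotientMem P₁ P₂ (X i)) :
    TorsionQuotientMem P₁ P₂ c.pt := by
  choose t ht hQ using hX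
  obtain ⟨T, hT⟩ := exists_isTorsionSubobject h₁ c.pt
  refine ⟨T, hT, ?_⟩
  let Q : ι → C := fun i => cokernel (t i).arrow
  have hcond : ∀ i, (t i).arrow ≫ c.inj i ≫ cokernel.π T.arrow = 0 := fun i => by
    rw [← Category.assoc]
    exact hT.comp_cokernel_π_eq_zero h₁.toIsSerre _ (ht i).1
  let w : ∐ Q ⟶ cokernel T.arrow :=
    Sigma.desc fun i => cokernel.desc (t i).arrow (c.inj i ≫ cokernel.π T.arrow) (hcond i)
  have hw : Epi w := by
    refine Preadditive.epi_of_cancel_zero _ fun h hwh => ?_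
    rw [← cancel_epi (cokernel.π T.arrow), comp_zero]
    refine hc.hom_ext fun ⟨i⟩ => ?_
    simpa [w, Cofan.inj] using cokernel.π (t i).arrow ≫= Sigma.ι Q i ≫= hwh
  exact h₂.quot w hw
    (h₂.sums Q (Cofan.mk (∐ Q) (Sigma.ι Q)) (coproductIsCoproduct Q) hQ)

lemma of_shortExact (h₁ : IsLocalizing P₁) (h₂ : IsStableLocalizing P₂) {S : ShortComplex C}
    (hS : S.ShortExact) (hX₁ : TorsionQuotientMem P₁ P₂ S.X₁)
    (hX₃ : TorsionQuotientMem P₁ P₂ S.X₃) : TorsionQuotientMem P₁ P₂ S.X₂ := by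
  obtain ⟨t₁, ht₁, hc₁⟩ := hX₁
  obtain ⟨t₂, ht₂⟩ := exists_isTorsionSubobject h₁ S.X₂
  refine ⟨t₂, ht₂, ?_⟩
  set b := S.f ≫ cokernel.π t₂.arrow
  have hM : P₂ (Abelian.image b) := h₂.mem_image_of_comp_eq_zero b
    (by rw [← Category.assoc]; exact ht₂.comp_cokernel_π_eq_zero h₁.toIsSerre _ ht₁.1) hc₁
  obtain ⟨d, hd⟩ := CokernelCofork.IsColimit.desc' hS.gIsCokernel
    (cokernel.π t₂.arrow ≫ cokernel.π b) (by rw [← Category.assoc]; exact cokernel.condition b)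
  have := hS.epi_g
  have : Epi d := epi_of_epi_fac hd
  obtain ⟨t, ht, hc⟩ := hX₃.of_epi h₁ h₂.toIsSerre d
  exact mem_of_isTorsionFree_of_epi h₁.toIsSerre h₂.toIsSerre h₂.stable
    (ht₂.isTorsionFree_cokernel h₁.toIsSerre) (cokernel.π b) hM t.arrow ht.1 hc

end TorsionQuotientMem

section Join

variable {P₁ P₂ : C → Prop} [WellPowered.{v} C] [HasCoproducts.{v} C]

lemma isLocalizing_torsionQuotientMem (h₁ : IsLocalizing P₁) (h₂ : IsStableLocalizing P₂) :
    IsLocalizing (TorsionQuotientMem P₁ P₂) where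
  zero _ hX := .of_mem_right h₁ h₂.toIsSerre (h₂.zero _ hX)
  iso e hX := hX.of_mono h₁ h₂.toIsSerre e.inv
  sub f _ hY := hY.of_mono h₁ h₂.toIsSerre f
  quot f _ hX := hX.of_epi h₁ h₂.toIsSerre f
  ext _ hS hX₁ hX₃ := .of_shortExact h₁ h₂ hS hX₁ hX₃
  sums X c hc hX := .of_isColimit h₁ h₂.toIsLocalizing X c hc hX

lemma isStable_torsionQuotientMem (h₁ : IsStableLocalizing P₁) (h₂ : IsStableLocalizing P₂) :
    IsStable (TorsionQuotientMem P₁ P₂) := by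
  rintro X Y f hf ⟨tX, htX, hcX⟩
  have := hf.1
  obtain ⟨tY, htY⟩ := exists_isTorsionSubobject h₁.toIsLocalizing Y
  refine ⟨tY, htY, ?_⟩
  set π := cokernel.π tY.arrow
  set b := f ≫ π
  have hM : P₂ (Abelian.image b) := h₂.mem_image_of_comp_eq_zero b
    (by rw [← Category.assoc]; exact htY.comp_cokernel_π_eq_zero h₁.toIsSerre _ htX.1) hcX
  refine h₂.stable (Abelian.image.ι b) (isEssentialMono_iff.2 fun K k _ hk => ?_) hM
  -- `K` meets the image of `X` trivially, so `X ∩ π⁻¹(K)` maps to zero in `Y / tY`.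
  have hXK : pullback.fst f (pullback.fst π k) ≫ f ≫ π = 0 := by
    have hb : b ≫ cokernel.π (Abelian.image.ι b) = 0 :=
      calc b ≫ cokernel.π (Abelian.image.ι b)
          = (Abelian.factorThruImage b ≫ Abelian.image.ι b) ≫ cokernel.π (Abelian.image.ι b) := by
            rw [Abelian.image.fac]
        _ = 0 := by rw [Category.assoc, cokernel.condition, comp_zero]
    have hzero : pullback.snd f (pullback.fst π k) ≫ pullback.snd π k = 0 := by
      refine zero_of_comp_mono (k ≫ cokernel.π (Abelian.image.ι b)) ?_
      rw [Category.assoc, ← pullback.condition_assoc, ← pullback.condition_assoc,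
        ← Category.assoc f, hb, comp_zero]
    rw [pullback.condition_assoc, pullback.condition, reassoc_of% hzero, zero_comp]
  have hX' : P₁ (pullback f (pullback.fst π k)) :=
    htY.mem_of_comp_cokernel_π_eq_zero h₁.toIsSerre _ (by rwa [Category.assoc])
  have hK' : P₁ (pullback π k) := h₁.stable _ (hf.pullback_snd (pullback.fst π k)) hX'
  have hk : pullback.snd π k ≫ k = 0 := by
    rw [← pullback.condition]
    exact htY.comp_cokernel_π_eq_zero h₁.toIsSerre _ hK'
  exact IsZero.of_mono_eq_zero k (by rwa [← cancel_epi (pullback.snd π k), comp_zero])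

end Join

theorem join_of_stable_isStable_general
    [HasColimits C] (hsep : ∃ G : C, IsSeparator G)
    (P₁ P₂ P₃ : C → Prop) (h₁ : IsStableLocalizing P₁) (h₂ : IsStableLocalizing P₂)
    (hjoin : IsJoin P₁ P₂ P₃) :
    IsStable P₃ := by
  obtain ⟨hP₃, hP₁₃, hP₂₃, hmin⟩ := hjoin
  obtain ⟨G, hG⟩ := hsep
  have : WellPowered.{v} C := wellPowered_of_isDetector G hG.isDetector
  have hP₃_iff : ∀ X, P₃ X ↔ TorsionQuotientMem P₁ P₂ X := fun X =>
    ⟨hmin _ (isLocalizing_torsionQuotientMem h₁.toIsLocalizing h₂)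
      (fun _ => .of_mem_left h₁.toIsLocalizing h₂.toIsSerre)
      (fun _ => .of_mem_right h₁.toIsLocalizing h₂.toIsSerre) X,
     fun ⟨t, ht, hc⟩ => hP₃.ext _ (.mk' (ShortComplex.cokernelSequence_exact t.arrow)
       (inferInstanceAs (Mono t.arrow)) inferInstance) (hP₁₃ _ ht.1) (hP₂₃ _ hc)⟩
  intro X Y f hf hX
  exact (hP₃_iff Y).2 (isStable_torsionQuotientMem h₁ h₂ f hf ((hP₃_iff X).1 hX))

/-- In a Grothendieck category, the join `L₁ ∨ L₂` (smallest
localizing subcategory containing both) of two stable localizing subcategories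
is stable. -/
theorem join_of_stable_isStable
    [HasColimits C] [AB5 C] (hsep : ∃ G : C, IsSeparator G)
    (P₁ P₂ P₃ : C → Prop) (h₁ : IsStableLocalizing P₁) (h₂ : IsStableLocalizing P₂)
    (hjoin : IsJoin P₁ P₂ P₃) :
    IsStable P₃ :=
  join_of_stable_isStable_general hsep P₁ P₂ P₃ h₁ h₂ hjoin

end CentralSheaf
end

section
/- For any Grothendieck category C, the lattice of localizing subcategories of C, ordered by inclusion with meet given by intersection and join by the smallest localizing subcategory containing both, is a distributive lattice. -/
open CategoryTheory Limits

universe w v u u₂ u₃ u₄ u₅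

/-! Write `Q` for `(L ∩ L₁) ∨ (L ∩ L₂)`; the inclusion `Q ⊆ L ∩ (L₁ ∨ L₂)` is formal. For the
converse, consider the objects all of whose subquotients lying in `L` lie in `Q`. This class
contains `L₁` and `L₂`, and it is localizing. Indeed, a subquotient `Y` of the middle term of a
short exact sequence has a subobject that is a subquotient of the first term, with quotient a
subquotient of the third; and, by AB5, a subobject of a direct sum is covered by its intersections
with the finite subsums, which reduces direct sums to finite ones, i.e. to extensions. Hence the
class contains `L₁ ∨ L₂`, and an object of `L ∩ (L₁ ∨ L₂)`, being a subquotient of itself, lies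
in `Q`. -/

namespace CentralSheaf

variable {C : Type u} [Category.{v} C]

def IsSubquotient (Y X : C) : Prop := ∃ (Z : C) (i : Z ⟶ X) (p : Z ⟶ Y), Mono i ∧ Epi p

namespace IsSubquotient

theorem refl (X : C) : IsSubquotient X X := ⟨X, 𝟙 X, 𝟙 X, inferInstance, inferInstance⟩

theorem of_mono {Y X : C} (f : Y ⟶ X) [Mono f] : IsSubquotient Y X :=
  ⟨Y, f, 𝟙 Y, inferInstance, inferInstance⟩

theorem of_epi {Y X : C} (f : X ⟶ Y) [Epi f] : IsSubquotient Y X :=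
  ⟨X, 𝟙 X, f, inferInstance, inferInstance⟩

end IsSubquotient

variable [Abelian C]

namespace IsSubquotient

theorem trans {Y X W : C} (hYX : IsSubquotient Y X) (hXW : IsSubquotient X W) :
    IsSubquotient Y W := by
  obtain ⟨Z, i, p, _, _⟩ := hYX
  obtain ⟨Z', i', p', _, _⟩ := hXW
  exact ⟨pullback p' i, pullback.fst p' i ≫ i', pullback.snd p' i ≫ p, mono_comp _ _,
    epi_comp _ _⟩

theorem isZero {Y X : C} (h : IsSubquotient Y X) (hX : IsZero X) : IsZero Y := by
  obtain ⟨Z, i, p, _, _⟩ := h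
  exact (hX.of_mono i).of_epi p

end IsSubquotient

theorem IsSerre.of_isSubquotient {P : C → Prop} (hP : IsSerre P) {Y X : C}
    (h : IsSubquotient Y X) (hX : P X) : P Y := by
  obtain ⟨Z, i, p, hi, hp⟩ := h
  exact hP.quot p hp (hP.sub i hi hX)

theorem IsSerre.isSerreClass {P : C → Prop} (hP : IsSerre P) : ObjectProperty.IsSerreClass P where
  exists_zero := ⟨_, isZero_zero C, hP.zero _ (isZero_zero C)⟩
  prop_of_mono f _ hY := hP.sub f inferInstance hY
  prop_of_epi f _ hX := hP.quot f inferInstance hX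
  prop_X₂_of_shortExact hS h₁ h₃ := hP.ext _ hS h₁ h₃

open ObjectProperty in
theorem IsSerre.isClosedUnderFiniteCoproducts {P : C → Prop} (hP : IsSerre P) :
    IsClosedUnderFiniteCoproducts P := by
  have := hP.isSerreClass
  have : IsClosedUnderBinaryCoproducts P := ⟨by
    rintro X ⟨⟨F, ι, hι⟩, hF⟩
    refine prop_of_iso _ ?_ (prop_biprod _ (hF ⟨.left⟩) (hF ⟨.right⟩))
    exact biprod.isoCoprod _ _ ≪≫ (HasColimit.isoOfNatIso (diagramIsoPair F)).symm ≪≫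
      (colimit.isColimit F).coconePointUniqueUpToIso hι⟩
  exact .mk'

theorem IsLocalizing.and {P P' : C → Prop} (h : IsLocalizing P) (h' : IsLocalizing P') :
    IsLocalizing (fun X => P X ∧ P' X) where
  zero X hX := ⟨h.zero X hX, h'.zero X hX⟩
  iso e hX := ⟨h.iso e hX.1, h'.iso e hX.2⟩
  sub f hf hY := ⟨h.sub f hf hY.1, h'.sub f hf hY.2⟩
  quot f hf hX := ⟨h.quot f hf hX.1, h'.quot f hf hX.2⟩
  ext S hS h₁ h₃ := ⟨h.ext S hS h₁.1 h₃.1, h'.ext S hS h₁.2 h₃.2⟩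
  sums X c hc hX := ⟨h.sums X c hc fun i => (hX i).1, h'.sums X c hc fun i => (hX i).2⟩

def SubquotientsWithin (P Q : C → Prop) (X : C) : Prop :=
  ∀ Y : C, IsSubquotient Y X → P Y → Q Y

section SubquotientsWithin

variable {P Q : C → Prop}

theorem SubquotientsWithin.of_isSerre {R : C → Prop} (hR : IsSerre R) (hRQ : ∀ X, P X → R X → Q X)
    {X : C} (hX : R X) : SubquotientsWithin P Q X :=
  fun Y hY hPY => hRQ Y hPY (hR.of_isSubquotient hY hX)

theorem SubquotientsWithin.of_shortExact (hP : IsSerre P) (hQ : IsSerre Q) {S : ShortComplex C}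
    (hS : S.ShortExact) (h₁ : SubquotientsWithin P Q S.X₁) (h₃ : SubquotientsWithin P Q S.X₃) :
    SubquotientsWithin P Q S.X₂ := by
  rintro Y ⟨Z, i, p, _, _⟩ hY
  have := hS.mono_f
  -- `kernel h` is `Z ∩ X₁`, and `coimage h ≅ Z / (Z ∩ X₁)` embeds into `X₃`.
  let h := i ≫ S.g
  let k := kernel.ι h ≫ p
  have hk : IsSubquotient (image k) S.X₁ := by
    let j := hS.exact.lift (kernel.ι h ≫ i) (by simp [h])
    have : Mono j := mono_of_mono_fac (hS.exact.lift_f _ _)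
    exact ⟨kernel h, j, factorThruImage k, inferInstance, inferInstance⟩
  have hc : IsSubquotient (cokernel (image.ι k)) S.X₃ := by
    let q := cokernel.desc (kernel.ι h) (p ≫ cokernel.π (image.ι k))
      (by simpa only [image.fac_assoc, comp_zero, k, Category.assoc] using
        factorThruImage k ≫= cokernel.condition (image.ι k))
    have : Epi q := epi_of_epi_fac (cokernel.π_desc _ _ _)
    exact ⟨Abelian.coimage h, Abelian.factorThruCoimage h, q, inferInstance, inferInstance⟩
  exact hQ.ext _ { exact := ShortComplex.exact_cokernel (image.ι k) }
    (h₁ _ hk (hP.sub (image.ι k) inferInstance hY))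
    (h₃ _ hc (hP.quot (cokernel.π (image.ι k)) inferInstance hY))

theorem IsSerre.subquotientsWithin (hP : IsSerre P) (hQ : IsSerre Q) :
    IsSerre (SubquotientsWithin P Q) where
  zero _ hX Y hY _ := hQ.zero Y (hY.isZero hX)
  iso e h Y hY := h Y (hY.trans (.of_mono e.inv))
  sub f _ h Y hY := h Y (hY.trans (.of_mono f))
  quot f _ h Y hY := h Y (hY.trans (.of_epi f))
  ext _ hS h₁ h₃ := SubquotientsWithin.of_shortExact hP hQ hS h₁ h₃

variable [HasColimits C] [AB5 C]

theorem SubquotientsWithin.of_isColimit (hP : IsSerre P) (hQ : IsLocalizing Q)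
    {J : Type v} [SmallCategory J] [IsFiltered J] {L : J ⥤ C} {c : Cocone L} (hc : IsColimit c)
    (hL : ∀ j, SubquotientsWithin P Q (L.obj j)) : SubquotientsWithin P Q c.pt := by
  rintro Y ⟨Z, i, p, _, _⟩ hY
  have := IsFiltered.isConnected J
  -- By AB5, `Z` is the colimit of its pullbacks to the `L.obj j`, so their images cover `Y`.
  let s := pullback.snd c.ι ((Functor.const J).map i)
  let Yj (j : J) := image (s.app j ≫ p)
  have hYj (j : J) : Q (Yj j) :=
    hL j _ ⟨_, (pullback.fst c.ι ((Functor.const J).map i)).app j, factorThruImage _,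
      inferInstance, inferInstance⟩ (hP.sub (image.ι _) inferInstance hY)
  let ψ : ∐ Yj ⟶ Y := Sigma.desc fun j => image.ι (s.app j ≫ p)
  have : Epi ψ := ⟨fun a b hab => by
    rw [← cancel_epi p]
    refine (hc.pullbackOfHasExactColimitsOfShape i).hom_ext fun j => ?_
    simpa [ψ, Yj, s] using factorThruImage (s.app j ≫ p) ≫= Sigma.ι Yj j ≫= hab⟩
  exact hQ.quot ψ this (hQ.sums Yj _ (coproductIsCoproduct Yj) hYj)

theorem SubquotientsWithin.of_isColimit_cofan (hP : IsSerre P) (hQ : IsLocalizing Q) {ι : Type v}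
    (X : ι → C) (c : Cofan X) (hc : IsColimit c) (hX : ∀ i, SubquotientsWithin P Q (X i)) :
    SubquotientsWithin P Q c.pt := by
  have hR := hP.subquotientsWithin hQ.toIsSerre
  have := hR.isClosedUnderFiniteCoproducts
  open CoproductsFromFiniteFiltered in
  have hcoprod : SubquotientsWithin P Q (∐ X) :=
    of_isColimit (c := finiteSubcoproductsCocone X) hP hQ (isColimitFiniteSubproductsCocone X)
      fun _ => ObjectProperty.prop_coproduct _ fun x => hX x.1.as
  exact hR.iso ((coproductIsCoproduct X).coconePointUniqueUpToIso hc) hcoprod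

theorem IsLocalizing.subquotientsWithin (hP : IsSerre P) (hQ : IsLocalizing Q) :
    IsLocalizing (SubquotientsWithin P Q) where
  toIsSerre := hP.subquotientsWithin hQ.toIsSerre
  sums X c hc hX := SubquotientsWithin.of_isColimit_cofan hP hQ X c hc hX

end SubquotientsWithin

theorem localizing_lattice_distributive_general
    [HasColimits C] [AB5 C]
    (P P₁ P₂ P₁₂ Q : C → Prop)
    (hP : IsLocalizing P) (h₁ : IsLocalizing P₁) (h₂ : IsLocalizing P₂)
    (hP₁₂ : IsJoin P₁ P₂ P₁₂)
    (hQ : IsJoin (fun X => P X ∧ P₁ X) (fun X => P X ∧ P₂ X) Q) :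
    ∀ X : C, (P X ∧ P₁₂ X) ↔ Q X := by
  obtain ⟨hP₁₂loc, hP₁_le, hP₂_le, hP₁₂_min⟩ := hP₁₂
  obtain ⟨hQloc, hQ₁_le, hQ₂_le, hQ_min⟩ := hQ
  have hP₁₂_within : ∀ X, P₁₂ X → SubquotientsWithin P Q X :=
    hP₁₂_min _ (.subquotientsWithin hP.toIsSerre hQloc)
      (fun _ => .of_isSerre h₁.toIsSerre fun Y hY hY₁ => hQ₁_le Y ⟨hY, hY₁⟩)
      (fun _ => .of_isSerre h₂.toIsSerre fun Y hY hY₂ => hQ₂_le Y ⟨hY, hY₂⟩)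
  intro X
  refine ⟨fun ⟨hX, hX₁₂⟩ => hP₁₂_within X hX₁₂ X (.refl X) hX, hQ_min _ (hP.and hP₁₂loc) ?_ ?_ X⟩
  · exact fun Y ⟨hY, hY₁⟩ => ⟨hY, hP₁_le Y hY₁⟩
  · exact fun Y ⟨hY, hY₂⟩ => ⟨hY, hP₂_le Y hY₂⟩

/-- The lattice of localizing subcategories of a Grothendieck
category (meet = intersection, join = smallest localizing subcategory containing
both) is distributive: `L ∩ (L₁ ∨ L₂) = (L ∩ L₁) ∨ (L ∩ L₂)`. -/
theorem localizing_lattice_distributive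
    [HasColimits C] [AB5 C] (hsep : ∃ G : C, IsSeparator G)
    (P P₁ P₂ P₁₂ Q : C → Prop)
    (hP : IsLocalizing P) (h₁ : IsLocalizing P₁) (h₂ : IsLocalizing P₂)
    (hP₁₂ : IsJoin P₁ P₂ P₁₂)
    (hQ : IsJoin (fun X => P X ∧ P₁ X) (fun X => P X ∧ P₂ X) Q) :
    ∀ X : C, (P X ∧ P₁₂ X) ↔ Q X :=
  localizing_lattice_distributive_general P P₁ P₂ P₁₂ Q hP h₁ h₂ hP₁₂ hQ

end CentralSheaf
end
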